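/- arXiv:math/9505209 — 4 statements merged into one kernel-verified Lean document; each statement's English description precedes it below -/
import Mathlib

section
/- Let H be a group, k a field, and 0 → V₁ → V₂ → V₃ → 0 a short exact sequence of k-linear H-representations. Let W be an H-invariant quotient of V₁, say V₁/V₀ ≅ W. Suppose T : V₂ → V₂ is an H-equivariant linear map preserving V₁ and V₀, which induces multiplication by the scalar λ on W and multiplication by the scalar μ on V₃. If λ ≠ μ, then W is also a quotient of V₂ (equivalently, the induced extension 0 → W → V₂/V₀ → V₃ → 0 splits). -/
/-- Lemma 2.5: given a short exact sequence `0 → V₁ → V₂ → V₃ → 0` of `k`-linear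
`H`-representations, an `H`-invariant quotient `W` of `V₁`, and an `H`-equivariant
linear map `T : V₂ → V₂` preserving `V₁` (inducing `T₁`) and inducing scalars `λ` on
`W` and `μ` on `V₃` with `λ ≠ μ`, the representation `W` is a quotient of `V₂`. -/
theorem lemma_2_5 {k : Type*} [Field k] {H : Type*} [Group H]
    {V₁ V₂ V₃ W : Type*}
    [AddCommGroup V₁] [Module k V₁] [AddCommGroup V₂] [Module k V₂]
    [AddCommGroup V₃] [Module k V₃] [AddCommGroup W] [Module k W]
    (ρ₁ : Representation k H V₁) (ρ₂ : Representation k H V₂)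
    (ρ₃ : Representation k H V₃) (ρW : Representation k H W)
    (i : V₁ →ₗ[k] V₂) (p : V₂ →ₗ[k] V₃) (q : V₁ →ₗ[k] W)
    (hi : Function.Injective i) (hp : Function.Surjective p)
    (hexact : LinearMap.range i = LinearMap.ker p)
    (hq : Function.Surjective q)
    (hiH : ∀ h : H, i ∘ₗ ρ₁ h = ρ₂ h ∘ₗ i)
    (hpH : ∀ h : H, p ∘ₗ ρ₂ h = ρ₃ h ∘ₗ p)
    (hqH : ∀ h : H, q ∘ₗ ρ₁ h = ρW h ∘ₗ q)
    (T : V₂ →ₗ[k] V₂) (T₁ : V₁ →ₗ[k] V₁)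
    (hTH : ∀ h : H, T ∘ₗ ρ₂ h = ρ₂ h ∘ₗ T)
    (hT₁ : T ∘ₗ i = i ∘ₗ T₁)
    (lam mu : k)
    (hTW : q ∘ₗ T₁ = lam • q)
    (hTV₃ : p ∘ₗ T = mu • p)
    (hlm : lam ≠ mu) :
    ∃ φ : V₂ →ₗ[k] W, Function.Surjective φ ∧ ∀ h : H, φ ∘ₗ ρ₂ h = ρW h ∘ₗ φ := by

  -- S = T - mu • id lands in ker p = range i
  set S : V₂ →ₗ[k] V₂ := T - mu • LinearMap.id with hS
  have hSrange : ∀ v : V₂, S v ∈ LinearMap.range i := by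
    intro v
    rw [hexact, LinearMap.mem_ker]
    have := congrArg (fun f => f v) hTV₃
    simp only [LinearMap.comp_apply, LinearMap.smul_apply] at this
    simp [hS, this]
  let e : V₁ ≃ₗ[k] LinearMap.range i := LinearEquiv.ofInjective i hi
  let s : V₂ →ₗ[k] V₁ :=
    e.symm.toLinearMap ∘ₗ S.codRestrict (LinearMap.range i) hSrange
  have hsi : ∀ v : V₂, i (s v) = S v := by
    intro v
    have : i (e.symm ⟨S v, hSrange v⟩) = (⟨S v, hSrange v⟩ : LinearMap.range i) := by
      have := e.apply_symm_apply ⟨S v, hSrange v⟩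
      calc i (e.symm ⟨S v, hSrange v⟩) = (e (e.symm ⟨S v, hSrange v⟩) : V₂) := rfl
        _ = _ := by rw [this]
    simpa [s, LinearMap.codRestrict] using this
  -- s ∘ i = T₁ - mu • id
  have hsiV₁ : ∀ v : V₁, s (i v) = T₁ v - mu • v := by
    intro v
    apply hi
    rw [hsi]
    have := congrArg (fun f => f v) hT₁
    simp only [LinearMap.comp_apply] at this
    simp [hS, this]
  refine ⟨q ∘ₗ s, ?_, ?_⟩
  · -- surjectivity
    intro w
    obtain ⟨v, hv⟩ := hq w
    refine ⟨(lam - mu)⁻¹ • i v, ?_⟩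
    have hqT₁ : q (T₁ v) = lam • q v := by
      have := congrArg (fun f => f v) hTW
      simpa using this
    have hne : lam - mu ≠ 0 := sub_ne_zero.mpr hlm
    simp only [LinearMap.comp_apply, map_smul, hsiV₁, map_sub, hqT₁, map_smul]
    rw [← sub_smul, smul_smul, inv_mul_cancel₀ hne, one_smul, hv]
  · -- equivariance
    intro h
    have hsH : ∀ v : V₂, s (ρ₂ h v) = ρ₁ h (s v) := by
      intro v
      apply hi
      rw [hsi]
      have h1 := congrArg (fun f => f (s v)) (hiH h)
      simp only [LinearMap.comp_apply] at h1
      rw [h1, hsi]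
      have h2 := congrArg (fun f => f v) (hTH h)
      simp only [LinearMap.comp_apply] at h2
      simp [hS, h2]
    ext v
    simp only [LinearMap.comp_apply, hsH]
    have := congrArg (fun f => f (s v)) (hqH h)
    simpa using this
end

section
/- Let u, y, v be symmetric 3×3 matrices over a commutative ring R with tr(y) = 0 and tr(u·y) = 0. Then det(u+y+v) − det(u+y) − det(u+v) − det(y+v) + det(u) + det(y) + det(v) = tr((2u − tr(u)·1)·y·v). -/
open Matrix

lemma det_polarization_fin3 {R : Type*} [CommRing R]
    (u y v : Matrix (Fin 3) (Fin 3) R) :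
    (u + y + v).det - (u + y).det - (u + v).det - (y + v).det + u.det + y.det + v.det =
      u.trace * y.trace * v.trace - u.trace * (y * v).trace - y.trace * (u * v).trace
        - v.trace * (u * y).trace + (u * y * v).trace + (u * v * y).trace := by
  simp only [Matrix.det_fin_three, Matrix.trace_fin_three, Matrix.mul_apply,
    Matrix.add_apply, Fin.sum_univ_three]
  ring

/-- For symmetric `3 × 3` matrices `u, y, v` with `tr y = 0` and `tr(uy) = 0`,
the trilinear polarization of `det` at `(u, y, v)` equals `tr((2u − (tr u)·1)·y·v)`. -/
theorem det_polarization_symm {R : Type*} [CommRing R]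
    (u y v : Matrix (Fin 3) (Fin 3) R)
    (hu : uᵀ = u) (hy : yᵀ = y) (hv : vᵀ = v)
    (hty : y.trace = 0) (htuy : (u * y).trace = 0) :
    (u + y + v).det - (u + y).det - (u + v).det - (y + v).det + u.det + y.det + v.det =
      ((2 • u - u.trace • (1 : Matrix (Fin 3) (Fin 3) R)) * y * v).trace := by
  rw [det_polarization_fin3, hty, htuy]
  have h1 : (u * v * y).trace = (u * y * v).trace := by
    calc (u * v * y).trace = (u * v * y)ᵀ.trace := (Matrix.trace_transpose _).symm
      _ = (yᵀ * (u * v)ᵀ).trace := by rw [Matrix.transpose_mul]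
      _ = (y * (vᵀ * uᵀ)).trace := by rw [hy, Matrix.transpose_mul]
      _ = (y * (v * u)).trace := by rw [hu, hv]
      _ = (y * v * u).trace := by rw [Matrix.mul_assoc]
      _ = (u * (y * v)).trace := Matrix.trace_mul_comm _ _
      _ = (u * y * v).trace := by rw [Matrix.mul_assoc]
  rw [h1]
  rw [Matrix.sub_mul, Matrix.sub_mul, Matrix.trace_sub, Matrix.smul_mul, Matrix.smul_mul,
    Matrix.smul_mul, Matrix.smul_mul, Matrix.trace_smul, Matrix.trace_smul, Matrix.one_mul,
    Matrix.mul_assoc, Matrix.trace_mul_comm y v]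
  push_cast [smul_eq_mul]
  ring_nf
end

section
/- Let x, y, z be trace-zero quaternions over a field F of characteristic ≠ 2, and let n be the 3×3 quaternion matrix with rows (0, x, y), (conj(x), 0, z), (conj(y), conj(z), 0). Then n² = 0 if and only if x² = y² = z² = x·y = x·z = y·z = 0. -/
open Quaternion Matrix

set_option maxHeartbeats 1000000 in
/-- For trace-zero quaternions `x, y, z` over a field of characteristic ≠ 2, the matrix
`n = !![0,x,y; x*,0,z; y*,z*,0]` satisfies `n² = 0` iff
`x² = y² = z² = xy = xz = yz = 0`. -/
theorem quaternion_matrix_sq_zero_iff' {F : Type*} [Field F] (hF : (2 : F) ≠ 0)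
    (x y z : ℍ[F]) (hx : star x = -x) (hy : star y = -y) (hz : star z = -z) :
    (!![0, x, y; star x, 0, z; star y, star z, 0] *
        !![0, x, y; star x, 0, z; star y, star z, 0] = 0) ↔
      (x * x = 0 ∧ y * y = 0 ∧ z * z = 0 ∧ x * y = 0 ∧ x * z = 0 ∧ y * z = 0) := by
  rw [hx, hy, hz]
  constructor
  · intro h
    have e := Matrix.ext_iff.mpr h
    have h00 := e 0 0; have h01 := e 0 1; have h02 := e 0 2
    have h11 := e 1 1; have h12 := e 1 2; have h22 := e 2 2
    simp [Matrix.mul_apply, Fin.sum_univ_three] at h00 h01 h02 h11 h12 h22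
    -- h00 : -(x*x) + -(y*y) = 0, h11 : -(x*x) + -(z*z) = 0, h22 : -(y*y) + -(z*z) = 0
    have hx2 : y * y + x * x = 0 := by
      have := congrArg Neg.neg h00; simpa [neg_add] using this
    have hx3 : z * z + x * x = 0 := by
      have := congrArg Neg.neg h11; simpa [neg_add] using this
    have hy2 : z * z + y * y = 0 := by
      have := congrArg Neg.neg h22; simpa [neg_add] using this
    have hsum : (y * y + x * x) + (z * z + x * x) = (x * x + x * x) + (z * z + y * y) := by
      abel
    rw [hx2, hx3, hy2, add_zero] at hsum
    have h2 : (2 : F) • (x * x) = 0 := by rw [two_smul]; simpa using hsum.symm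
    have hxx : x * x = 0 := by
      have := congrArg (fun q => (2 : F)⁻¹ • q) h2
      simpa [smul_smul, inv_mul_cancel₀ hF] using this
    have hyy : y * y = 0 := by
      have := hx2; rw [hxx, add_zero] at this; exact this
    have hzz : z * z = 0 := by
      have := hx3; rw [hxx, add_zero] at this; exact this
    exact ⟨hxx, hyy, hzz, h12, h02, h01⟩
  · rintro ⟨hxx, hyy, hzz, hxy, hxz, hyz⟩
    have hyx : y * x = 0 := by
      have : y * x = star (x * y) := by rw [StarMul.star_mul, hx, hy, neg_mul_neg]
      rw [this, hxy, star_zero]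
    have hzx : z * x = 0 := by
      have : z * x = star (x * z) := by rw [StarMul.star_mul, hx, hz, neg_mul_neg]
      rw [this, hxz, star_zero]
    have hzy : z * y = 0 := by
      have : z * y = star (y * z) := by rw [StarMul.star_mul, hy, hz, neg_mul_neg]
      rw [this, hyz, star_zero]
    refine Matrix.ext_iff.mp fun i j => ?_
    fin_cases i <;> fin_cases j <;>
      simp [Matrix.mul_apply, Fin.sum_univ_three, hxx, hyy, hzz, hxy, hxz, hyz, hyx, hzx, hzy]
end

section
/- Let F be a field and let y, z be linearly independent 3×3 matrices over F such that every element of the span of {y, z} squares to zero (equivalently, y² = z² = 0 and yz + zy = 0). Then ker(y) = ker(z) or im(y) = im(z) (as subspaces of F³). -/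
open Matrix

private lemma aux_rank_one {F : Type*} [Field F] (y z : Matrix (Fin 3) (Fin 3) F)
    (hy : y * y = 0) (hz : z * z = 0) (hyz : y * z + z * y = 0) (hy0 : y ≠ 0) :
    Module.finrank F (LinearMap.range y.mulVecLin) = 1 ∧
      LinearMap.range y.mulVecLin ≤ LinearMap.ker z.mulVecLin := by
  set f := y.mulVecLin with hf
  set g := z.mulVecLin with hg
  have hff : ∀ x, f (f x) = 0 := by
    intro x
    have : (y * y).mulVecLin x = f (f x) := by rw [Matrix.mulVecLin_mul]; rfl
    rw [← this, hy, Matrix.mulVecLin_zero, LinearMap.zero_apply]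
  have hgg : ∀ x, g (g x) = 0 := by
    intro x
    have : (z * z).mulVecLin x = g (g x) := by rw [Matrix.mulVecLin_mul]; rfl
    rw [← this, hz, Matrix.mulVecLin_zero, LinearMap.zero_apply]
  have hf0 : f ≠ 0 := by
    intro h
    apply hy0
    ext i j
    have := congrFun (congrArg DFunLike.coe h) (Pi.single j 1)
    simpa [hf, Matrix.mulVecLin, Matrix.mulVec_single] using congrFun this i
  obtain ⟨x₀, hx₀⟩ : ∃ x, f x ≠ 0 := by
    by_contra h
    push_neg at h
    exact hf0 (LinearMap.ext h)
  have hrk : LinearMap.range f ≤ LinearMap.ker f := by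
    rintro _ ⟨x, rfl⟩
    exact hff x
  have hrn : Module.finrank F (LinearMap.range f) + Module.finrank F (LinearMap.ker f) = 3 := by
    have := LinearMap.finrank_range_add_finrank_ker f
    simpa using this
  have hle : Module.finrank F (LinearMap.range f) ≤ Module.finrank F (LinearMap.ker f) :=
    Submodule.finrank_mono hrk
  have hpos : 0 < Module.finrank F (LinearMap.range f) := by
    rw [Module.finrank_pos_iff, Submodule.nontrivial_iff_ne_bot, Submodule.ne_bot_iff]
    exact ⟨f x₀, ⟨x₀, rfl⟩, hx₀⟩
  have hr1 : Module.finrank F (LinearMap.range f) = 1 := by omega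
  set u := f x₀ with hu
  have hspan : LinearMap.range f = Submodule.span F {u} := by
    refine (Submodule.eq_of_le_of_finrank_le ?_ ?_).symm
    · rw [Submodule.span_le, Set.singleton_subset_iff]
      exact ⟨x₀, rfl⟩
    · rw [hr1, finrank_span_singleton hx₀]
  have hgu : g u ∈ LinearMap.range f := by
    have h1 : z * y = -(y * z) := by
      have := hyz
      linear_combination (norm := noncomm_ring) this
    have e1 : g (f x₀) = (z * y).mulVecLin x₀ := by rw [Matrix.mulVecLin_mul]; rfl
    have e2 : f (g x₀) = (y * z).mulVecLin x₀ := by rw [Matrix.mulVecLin_mul]; rfl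
    have h2 : g (f x₀) = -(f (g x₀)) := by
      rw [e1, e2, h1]
      simp [Matrix.mulVecLin_apply, Matrix.neg_mulVec]
    exact ⟨-(g x₀), by rw [map_neg, ← h2, hu]⟩
  -- g u = c • u, then c = 0
  have hgu0 : g u = 0 := by
    rw [hspan, Submodule.mem_span_singleton] at hgu
    obtain ⟨c, hc⟩ := hgu
    have h2 : (c * c) • u = 0 := by
      have h3 := hgg u
      rw [← hc, _root_.map_smul, ← hc, smul_smul] at h3
      exact h3
    have hc0 : c = 0 := by
      rcases smul_eq_zero.mp h2 with h | h
      · exact mul_self_eq_zero.mp h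
      · exact absurd h hx₀
    rw [← hc, hc0, zero_smul]
  refine ⟨hr1, ?_⟩
  rw [hspan, Submodule.span_le, Set.singleton_subset_iff]
  exact hgu0

/-- A two-dimensional singular subspace of `3 × 3` matrices (every element of the span
of `{y, z}` squares to zero, with `y, z` linearly independent) has a common kernel or a
common image. -/
theorem singular_plane_common_ker_or_im {F : Type*} [Field F]
    (y z : Matrix (Fin 3) (Fin 3) F)
    (hind : LinearIndependent F ![y, z])
    (hsq : ∀ a b : F, (a • y + b • z) * (a • y + b • z) = 0) :
    LinearMap.ker y.mulVecLin = LinearMap.ker z.mulVecLin ∨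
      LinearMap.range y.mulVecLin = LinearMap.range z.mulVecLin := by
  have hy : y * y = 0 := by simpa using hsq 1 0
  have hz : z * z = 0 := by simpa using hsq 0 1
  have hyz : y * z + z * y = 0 := by
    have h11 : (y + z) * (y + z) = 0 := by simpa using hsq 1 1
    have expand : (y + z) * (y + z) = y * y + (y * z + z * y) + z * z := by noncomm_ring
    rw [expand, hy, hz, zero_add, add_zero] at h11
    exact h11
  have hy0 : y ≠ 0 := by
    have := hind.ne_zero 0
    simpa using this
  have hz0 : z ≠ 0 := by
    have := hind.ne_zero 1
    simpa using this
  obtain ⟨hr1y, hyz_le⟩ := aux_rank_one y z hy hz hyz hy0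
  obtain ⟨hr1z, hzy_le⟩ := aux_rank_one z y hz hy (by rw [add_comm]; exact hyz) hz0
  obtain ⟨-, hyy_le⟩ := aux_rank_one y y hy hy (by rw [hy, add_zero]) hy0
  obtain ⟨-, hzz_le⟩ := aux_rank_one z z hz hz (by rw [hz, add_zero]) hz0
  set f := y.mulVecLin
  set g := z.mulVecLin
  by_cases hker : LinearMap.ker f = LinearMap.ker g
  · exact Or.inl hker
  right
  -- kernels have dimension 2
  have hrny : Module.finrank F (LinearMap.range f) + Module.finrank F (LinearMap.ker f) = 3 := by
    simpa using LinearMap.finrank_range_add_finrank_ker f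
  have hrnz : Module.finrank F (LinearMap.range g) + Module.finrank F (LinearMap.ker g) = 3 := by
    simpa using LinearMap.finrank_range_add_finrank_ker g
  have hky : Module.finrank F (LinearMap.ker f) = 2 := by omega
  have hkz : Module.finrank F (LinearMap.ker g) = 2 := by omega
  -- intersection of kernels has dimension 1
  set W := LinearMap.ker f ⊓ LinearMap.ker g with hW
  have hsupinf : Module.finrank F ↥(LinearMap.ker f ⊔ LinearMap.ker g) + Module.finrank F W = 4 := by
    rw [Submodule.finrank_sup_add_finrank_inf_eq, hky, hkz]
  have hsup3 : Module.finrank F ↥(LinearMap.ker f ⊔ LinearMap.ker g) ≤ 3 := by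
    have := Submodule.finrank_le (LinearMap.ker f ⊔ LinearMap.ker g)
    simpa using this
  have hWle : Module.finrank F W ≤ 2 := hky ▸ Submodule.finrank_mono inf_le_left
  have hWne2 : Module.finrank F W ≠ 2 := by
    intro h2
    apply hker
    have e1 : W = LinearMap.ker f :=
      Submodule.eq_of_le_of_finrank_le inf_le_left (by rw [hky, h2])
    have e2 : W = LinearMap.ker g :=
      Submodule.eq_of_le_of_finrank_le inf_le_right (by rw [hkz, h2])
    rw [← e1, e2]
  have hW1 : Module.finrank F W = 1 := by omega
  have hfW : LinearMap.range f = W :=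
    Submodule.eq_of_le_of_finrank_le (le_inf hyy_le hyz_le) (by rw [hW1, hr1y])
  have hgW : LinearMap.range g = W :=
    Submodule.eq_of_le_of_finrank_le (le_inf hzy_le hzz_le) (by rw [hW1, hr1z])
  rw [hfW, hgW]
end
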